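/- Let (K,F) be a fair finite Kripke structure over AP and let Γ be a nonempty subset of AP. Let acc be a fresh proposition not in AP. Then there exist a finite Kripke structure K̂ over AP ∪ {acc} and an LTL formula θ̂ over AP ∪ {acc} such that stfr_Γ(L(K,F)) = {(w)_AP : w ∈ L(K̂) and w ⊨ θ̂}, where (w)_AP denotes the pointwise projection of w onto AP and stfr_Γ(L(K,F)) := {stfr_Γ(π) : π ∈ L(K,F)}. -/

import Mathlib

set_option linter.unusedVariables false

open Classical

/-- A trace over a set `AP` of atomic propositions: an infinite word over `2^AP`. -/
abbrev Trace (AP : Type) : Type := ℕ → Set AP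

/-- Syntax of LTL formulas over `AP` (with `⊤`). -/
inductive LTL (AP : Type) : Type where
  | tt   : LTL AP
  | atom : AP → LTL AP
  | neg  : LTL AP → LTL AP
  | conj : LTL AP → LTL AP → LTL AP
  | next : LTL AP → LTL AP
  | untl : LTL AP → LTL AP → LTL AP
deriving DecidableEq

namespace LTL

/-- Satisfaction of an LTL formula on a pointed trace. -/
def Sat {AP : Type} : LTL AP → Trace AP → ℕ → Prop
  | tt, _, _ => True
  | atom p, π, i => p ∈ π i
  | neg θ, π, i => ¬ Sat θ π i
  | conj θ₁ θ₂, π, i => Sat θ₁ π i ∧ Sat θ₂ π i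
  | next θ, π, i => Sat θ π (i + 1)
  | untl θ₁ θ₂, π, i => ∃ j, i ≤ j ∧ Sat θ₂ π j ∧ ∀ k, i ≤ k → k < j → Sat θ₁ π k

def or {AP : Type} (a b : LTL AP) : LTL AP := neg (conj (neg a) (neg b))
def impl {AP : Type} (a b : LTL AP) : LTL AP := or (neg a) b
def iff {AP : Type} (a b : LTL AP) : LTL AP := conj (impl a b) (impl b a)
def ev {AP : Type} (a : LTL AP) : LTL AP := untl tt a
def alw {AP : Type} (a : LTL AP) : LTL AP := neg (ev (neg a))

def bigConj {AP : Type} : List (LTL AP) → LTL AP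
  | [] => tt
  | θ :: l => conj θ (bigConj l)

def bigDisj {AP : Type} : List (LTL AP) → LTL AP
  | [] => neg tt
  | θ :: l => or θ (bigDisj l)

/-- The subformulas of an LTL formula. -/
def subf {AP : Type} [DecidableEq AP] : LTL AP → Finset (LTL AP)
  | tt => {tt}
  | atom p => {atom p}
  | neg θ => insert (neg θ) (subf θ)
  | conj a b => insert (conj a b) (subf a ∪ subf b)
  | next θ => insert (next θ) (subf θ)
  | untl a b => insert (untl a b) (subf a ∪ subf b)

/-- Negation, identifying `¬¬θ` with `θ`. -/
def negId {AP : Type} : LTL AP → LTL AP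
  | neg θ => θ
  | θ => neg θ

end LTL

/-- The closure of a finite set of LTL formulas: all subformulas and their
negations (identifying `¬¬θ` with `θ`). -/
def clOf {AP : Type} [DecidableEq AP] (Γ : Finset (LTL AP)) : Finset (LTL AP) :=
  (Γ.biUnion LTL.subf) ∪ (Γ.biUnion LTL.subf).image LTL.negId

/-- Positions `h` and `k` of `π` disagree on the truth value of some formula of `Γ`. -/
def profDiff {AP : Type} (Γ : Set (LTL AP)) (π : Trace AP) (h k : ℕ) : Prop :=
  ∃ θ ∈ Γ, ¬ (LTL.Sat θ π h ↔ LTL.Sat θ π k)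

/-- `IsStutterFact Γ π m f` : the increasing sequence of positions `f 0, f 1, …`
(of length `m + 1`, where `m ∈ ℕ∪{∞}`) is the Γ-stutter factorization of `π`:
`f 0 = 0`; the sequence is strictly increasing (below `m`); the truth value of every
formula of `Γ` is constant on each segment `[f j, f (j+1))` for `j < m` and on the
final infinite segment `[f m, ∞)` when `m` is finite; and between two adjacent
segments the truth value of some formula of `Γ` changes. -/
def IsStutterFact {AP : Type} (Γ : Set (LTL AP)) (π : Trace AP) (m : ℕ∞) (f : ℕ → ℕ) : Prop :=
  f 0 = 0 ∧
  (∀ j : ℕ, (j : ℕ∞) < m → f j < f (j + 1)) ∧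
  (∀ j : ℕ, (j : ℕ∞) < m → ∀ θ ∈ Γ, ∀ h k : ℕ,
      f j ≤ h → h < f (j + 1) → f j ≤ k → k < f (j + 1) →
      (LTL.Sat θ π h ↔ LTL.Sat θ π k)) ∧
  (∀ mf : ℕ, m = (mf : ℕ∞) → ∀ θ ∈ Γ, ∀ h k : ℕ,
      f mf ≤ h → f mf ≤ k → (LTL.Sat θ π h ↔ LTL.Sat θ π k)) ∧
  (∀ j : ℕ, (j : ℕ∞) < m → ∃ θ ∈ Γ, (LTL.Sat θ π (f j) ↔ ¬ LTL.Sat θ π (f (j + 1))))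

/-- The position component of the Γ-successor `succ_Γ(π, i)` of a pointed trace:
the first position of the segment (of the Γ-stutter factorization of `π`)
following the one containing `i`, if it exists, and `i + 1` otherwise. -/
noncomputable def succPos {AP : Type} (Γ : Set (LTL AP)) (π : Trace AP) (i : ℕ) : ℕ :=
  if h : ∃ j, i < j ∧ profDiff Γ π i j then Nat.find h else i + 1

/-- The sequence of positions of `π` selected by the Γ-stutter trace of `π`. -/
noncomputable def stfrNth {AP : Type} (Γ : Set (LTL AP)) (π : Trace AP) : ℕ → ℕ
  | 0 => 0
  | k + 1 => succPos Γ π (stfrNth Γ π k)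

/-- The Γ-stutter trace `stfr_Γ(π)` of `π`. -/
noncomputable def stfr {AP : Type} (Γ : Set (LTL AP)) (π : Trace AP) : Trace AP :=
  fun k => π (stfrNth Γ π k)

/-- Syntax of LTL_S: LTL with stutter-relativized temporal modalities. -/
inductive LTLS (AP : Type) : Type where
  | tt    : LTLS AP
  | atom  : AP → LTLS AP
  | neg   : LTLS AP → LTLS AP
  | conj  : LTLS AP → LTLS AP → LTLS AP
  | nextR : Finset (LTL AP) → LTLS AP → LTLS AP
  | untlR : Finset (LTL AP) → LTLS AP → LTLS AP → LTLS AP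

/-- Satisfaction of an LTL_S formula on a pointed trace. -/
def LTLS.Sat {AP : Type} : LTLS AP → Trace AP → ℕ → Prop
  | .tt, _, _ => True
  | .atom p, π, i => p ∈ π i
  | .neg ψ, π, i => ¬ LTLS.Sat ψ π i
  | .conj a b, π, i => LTLS.Sat a π i ∧ LTLS.Sat b π i
  | .nextR Γ ψ, π, i => LTLS.Sat ψ π (succPos (↑Γ) π i)
  | .untlR Γ a b, π, i => ∃ j : ℕ,
      LTLS.Sat b π ((succPos (↑Γ : Set (LTL AP)) π)^[j] i) ∧
      ∀ k < j, LTLS.Sat a π ((succPos (↑Γ : Set (LTL AP)) π)^[k] i)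

/-- A pointed trace assignment: maps each trace variable to a pointed trace. -/
abbrev PTA (AP V : Type) : Type := V → Trace AP × ℕ

/-- The Γ-successor of a pointed trace assignment. -/
noncomputable def succA {AP V : Type} (Γ : Set (LTL AP)) (Δ : PTA AP V) : PTA AP V :=
  fun x => ((Δ x).1, succPos Γ (Δ x).1 (Δ x).2)

/-- Quantifier-free HyperLTL_S formulas over propositions `AP` and trace variables `V`. -/
inductive HSQF (AP V : Type) : Type where
  | tt    : HSQF AP V
  | atom  : AP → V → HSQF AP V
  | neg   : HSQF AP V → HSQF AP V
  | conj  : HSQF AP V → HSQF AP V → HSQF AP V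
  | nextR : Finset (LTL AP) → HSQF AP V → HSQF AP V
  | untlR : Finset (LTL AP) → HSQF AP V → HSQF AP V → HSQF AP V

namespace HSQF

/-- Satisfaction of a quantifier-free HyperLTL_S formula on a pointed trace assignment. -/
def Sat {AP V : Type} : HSQF AP V → PTA AP V → Prop
  | tt, _ => True
  | atom p x, Δ => p ∈ (Δ x).1 (Δ x).2
  | neg ψ, Δ => ¬ Sat ψ Δ
  | conj a b, Δ => Sat a Δ ∧ Sat b Δ
  | nextR Γ ψ, Δ => Sat ψ (succA (↑Γ) Δ)
  | untlR Γ a b, Δ => ∃ i : ℕ,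
      Sat b ((succA (↑Γ : Set (LTL AP)))^[i] Δ) ∧
      ∀ k < i, Sat a ((succA (↑Γ : Set (LTL AP)))^[k] Δ)

/-- Trace variables occurring in a quantifier-free HyperLTL_S formula. -/
def vars {AP V : Type} : HSQF AP V → Set V
  | tt => ∅
  | atom _ x => {x}
  | neg ψ => vars ψ
  | conj a b => vars a ∪ vars b
  | nextR _ ψ => vars ψ
  | untlR _ a b => vars a ∪ vars b

/-- The subscripts of the temporal modalities occurring in a formula. -/
def subs {AP V : Type} : HSQF AP V → Set (Finset (LTL AP))
  | tt => ∅
  | atom _ _ => ∅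
  | neg ψ => subs ψ
  | conj a b => subs a ∪ subs b
  | nextR Γ ψ => insert Γ (subs ψ)
  | untlR Γ a b => insert Γ (subs a ∪ subs b)

/-- `ψ` is in the fragment HyperLTL_S[Γ]: every modality subscript equals `Γ`. -/
def InFragment {AP V : Type} (Γ : Finset (LTL AP)) (ψ : HSQF AP V) : Prop :=
  ∀ s ∈ ψ.subs, s = Γ

/-- `ψ` is a one-variable formula. -/
def OneVar {AP V : Type} (ψ : HSQF AP V) : Prop := ∃ x : V, ψ.vars ⊆ {x}

/-- Replace every modality subscript by `∅`, yielding a HyperLTL formula. -/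
def toHLTL {AP V : Type} : HSQF AP V → HSQF AP V
  | tt => tt
  | atom p x => atom p x
  | neg ψ => neg (toHLTL ψ)
  | conj a b => conj (toHLTL a) (toHLTL b)
  | nextR _ ψ => nextR ∅ (toHLTL ψ)
  | untlR _ a b => untlR ∅ (toHLTL a) (toHLTL b)

end HSQF

/-- Boolean combinations of formulas satisfying a base predicate. -/
inductive BoolCombOf {AP V : Type} (P : HSQF AP V → Prop) : HSQF AP V → Prop
  | base {ψ} : P ψ → BoolCombOf P ψ
  | tt : BoolCombOf P .tt
  | neg {ψ} : BoolCombOf P ψ → BoolCombOf P (.neg ψ)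
  | conj {a b} : BoolCombOf P a → BoolCombOf P b → BoolCombOf P (.conj a b)

/-- Trace quantifiers. -/
inductive Quant : Type where
  | ex  : Quant
  | all : Quant
deriving DecidableEq

/-- Satisfaction of a block of trace quantifiers followed by a matrix `P`,
over a set `L` of traces, starting from the assignment `Δ`. -/
def SatPfx {AP V : Type} [DecidableEq V] (L : Set (Trace AP)) :
    List (Quant × V) → (PTA AP V → Prop) → PTA AP V → Prop
  | [], P, Δ => P Δ
  | (Quant.ex, x) :: qs, P, Δ => ∃ π ∈ L, SatPfx L qs P (Function.update Δ x (π, 0))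
  | (Quant.all, x) :: qs, P, Δ => ∀ π ∈ L, SatPfx L qs P (Function.update Δ x (π, 0))

/-- A HyperLTL_S sentence: a quantifier prefix and a quantifier-free matrix. -/
structure HSSentence (AP V : Type) : Type where
  pre : List (Quant × V)
  matrix : HSQF AP V

/-- The sentence is closed: quantified variables are pairwise distinct and
every trace variable of the matrix is bound by the prefix. -/
def HSSentence.Closed {AP V : Type} (φ : HSSentence AP V) : Prop :=
  (φ.pre.map Prod.snd).Nodup ∧ ∀ x ∈ φ.matrix.vars, x ∈ φ.pre.map Prod.snd

/-- `L ⊨ φ` for a HyperLTL_S sentence `φ` and a set `L` of traces. -/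
def HSSentence.Models {AP V : Type} [DecidableEq V] (φ : HSSentence AP V)
    (L : Set (Trace AP)) : Prop :=
  ∀ Δ₀ : PTA AP V, SatPfx L φ.pre (fun Δ => φ.matrix.Sat Δ) Δ₀

/-- A simple HyperLTL_S sentence: its matrix is a Boolean combination of
HyperLTL_S[Γ] formulas (for a common finite set `Γ` of LTL formulas) and of
one-variable quantifier-free formulas. -/
def HSSentence.Simple {AP V : Type} (φ : HSSentence AP V) : Prop :=
  ∃ Γ : Finset (LTL AP),
    BoolCombOf (fun ψ => ψ.InFragment Γ ∨ ψ.OneVar) φ.matrix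

/-- A Kripke structure over `AP` with state type `S`. -/
structure Kripke (AP S : Type) : Type where
  init : Set S
  E : Set (S × S)
  total : ∀ s : S, ∃ t : S, (s, t) ∈ E
  V : S → Set AP

namespace Kripke

/-- A path of a Kripke structure. -/
def IsPath {AP S : Type} (K : Kripke AP S) (ν : ℕ → S) : Prop :=
  ν 0 ∈ K.init ∧ ∀ i : ℕ, (ν i, ν (i + 1)) ∈ K.E

/-- The set of traces of a Kripke structure. -/
def Lang {AP S : Type} (K : Kripke AP S) : Set (Trace AP) :=
  {π | ∃ ν : ℕ → S, K.IsPath ν ∧ π = fun i => K.V (ν i)}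

/-- The set of traces of `F`-fair paths of a Kripke structure. -/
def FairLang {AP S : Type} (K : Kripke AP S) (F : Set S) : Set (Trace AP) :=
  {π | ∃ ν : ℕ → S, K.IsPath ν ∧ (∀ N : ℕ, ∃ i, N ≤ i ∧ ν i ∈ F) ∧
        π = fun i => K.V (ν i)}

end Kripke

/-- A finite Kripke structure over `AP` (states are `Fin n`). -/
structure FinKripke (AP : Type) : Type where
  n : ℕ
  K : Kripke AP (Fin n)

def FinKripke.Lang {AP : Type} (K : FinKripke AP) : Set (Trace AP) := K.K.Lang

def FinKripke.FairLang {AP : Type} (K : FinKripke AP) (F : Set (Fin K.n)) :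
    Set (Trace AP) := K.K.FairLang F

/-- A nondeterministic Büchi automaton over alphabet `Sig` (finitely many states). -/
structure NBA (Sig : Type) : Type where
  n : ℕ
  init : Set (Fin n)
  trans : Set (Fin n × Sig × Fin n)
  acc : Set (Fin n)

/-- The ω-language of an NBA. -/
def NBA.Lang {Sig : Type} (A : NBA Sig) : Set (ℕ → Sig) :=
  {w | ∃ ρ : ℕ → Fin A.n, ρ 0 ∈ A.init ∧ (∀ i : ℕ, (ρ i, w i, ρ (i + 1)) ∈ A.trans) ∧
        ∀ N : ℕ, ∃ i, N ≤ i ∧ ρ i ∈ A.acc}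

/-- Positive Boolean formulas over `X`. -/
inductive PosBool (X : Type) : Type where
  | tt   : PosBool X
  | ff   : PosBool X
  | var  : X → PosBool X
  | por  : PosBool X → PosBool X → PosBool X
  | pand : PosBool X → PosBool X → PosBool X

/-- Satisfaction of a positive Boolean formula by a set of variables. -/
def PosBool.SatBy {X : Type} (S : Set X) : PosBool X → Prop
  | .tt => True
  | .ff => False
  | .var x => x ∈ S
  | .por a b => a.SatBy S ∨ b.SatBy S
  | .pand a b => a.SatBy S ∧ b.SatBy S

/-- A Büchi alternating asynchronous word automaton with `m` directions (an `mAAWA`)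
over alphabet `Sig`, with finitely many states. -/
structure AAWA (Sig : Type) (m : ℕ) : Type where
  n : ℕ
  init : Fin n
  trans : Fin n → (Fin m → Sig) → PosBool (Fin n × Fin m)
  acc : Set (Fin n)

/-- A run of an `mAAWA` over an `m`-tuple of infinite words: a `(Q × ℕ^m)`-labeled tree. -/
structure AAWARun {Sig : Type} {m : ℕ} (A : AAWA Sig m) (w : Fin m → (ℕ → Sig)) : Type where
  T : Set (List ℕ)
  Lab : List ℕ → Fin A.n × (Fin m → ℕ)
  rootMem : [] ∈ T
  pclosed : ∀ τ ∈ T, ∀ σ : List ℕ, σ <+: τ → σ ∈ T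
  rootLab : Lab [] = (A.init, fun _ => 0)
  step : ∀ τ ∈ T, ∃ (k : ℕ) (c : Fin k → Fin A.n × Fin m),
      (A.trans (Lab τ).1 (fun d => w d ((Lab τ).2 d))).SatBy (Set.range c) ∧
      (∀ j : ℕ, τ ++ [j] ∈ T ↔ j < k) ∧
      ∀ j : Fin k, Lab (τ ++ [j.1]) =
        ((c j).1, fun d => if d = (c j).2 then (Lab τ).2 d + 1 else (Lab τ).2 d)

/-- The node of a branch at depth `i`. -/
def branchPrefix (b : ℕ → ℕ) (i : ℕ) : List ℕ := (List.range i).map b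

/-- `b` describes an infinite branch of the run tree. -/
def AAWARun.IsBranch {Sig : Type} {m : ℕ} {A : AAWA Sig m} {w : Fin m → (ℕ → Sig)}
    (r : AAWARun A w) (b : ℕ → ℕ) : Prop :=
  ∀ i : ℕ, branchPrefix b i ∈ r.T

/-- A run is accepting if every infinite branch visits accepting states infinitely often. -/
def AAWARun.Accepting {Sig : Type} {m : ℕ} {A : AAWA Sig m} {w : Fin m → (ℕ → Sig)}
    (r : AAWARun A w) : Prop :=
  ∀ b : ℕ → ℕ, r.IsBranch b → ∀ N : ℕ, ∃ i, N ≤ i ∧ (r.Lab (branchPrefix b i)).1 ∈ A.acc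

/-- The language of an `mAAWA`: the `m`-tuples of infinite words admitting an accepting run. -/
def AAWA.Lang {Sig : Type} {m : ℕ} (A : AAWA Sig m) : Set (Fin m → (ℕ → Sig)) :=
  {w | ∃ r : AAWARun A w, r.Accepting}

/-- `A` is `k`-synchronous: in every run the reading heads stay within distance `k`. -/
def AAWA.Synchronous {Sig : Type} {m : ℕ} (A : AAWA Sig m) (k : ℕ) : Prop :=
  ∀ (w : Fin m → (ℕ → Sig)) (r : AAWARun A w), ∀ τ ∈ r.T, ∀ d d' : Fin m,
    (r.Lab τ).2 d ≤ (r.Lab τ).2 d' + k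

/-- Quantifier-free HyperLTL_C formulas over propositions `AP` and trace variables `V`:
HyperLTL extended with context modalities `⟨C⟩` for nonempty sets `C` of trace variables. -/
inductive HCQF (AP V : Type) : Type where
  | tt   : HCQF AP V
  | atom : AP → V → HCQF AP V
  | neg  : HCQF AP V → HCQF AP V
  | conj : HCQF AP V → HCQF AP V → HCQF AP V
  | next : HCQF AP V → HCQF AP V
  | untl : HCQF AP V → HCQF AP V → HCQF AP V
  | ctx  : (C : Set V) → C.Nonempty → HCQF AP V → HCQF AP V

/-- `Δ +_C i` : advance by `i` the positions of the pointed traces assigned to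
the variables in the context `C`, leaving the others unchanged. -/
noncomputable def shiftA {AP V : Type} (Δ : PTA AP V) (C : Set V) (i : ℕ) : PTA AP V :=
  fun x => if x ∈ C then ((Δ x).1, (Δ x).2 + i) else Δ x

namespace HCQF

/-- Satisfaction `(Δ, C) ⊨ ψ` of a quantifier-free HyperLTL_C formula. -/
def Sat {AP V : Type} : HCQF AP V → PTA AP V → Set V → Prop
  | tt, _, _ => True
  | atom p x, Δ, _ => p ∈ (Δ x).1 (Δ x).2
  | neg ψ, Δ, C => ¬ Sat ψ Δ C
  | conj a b, Δ, C => Sat a Δ C ∧ Sat b Δ C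
  | next ψ, Δ, C => Sat ψ (shiftA Δ C 1) C
  | untl a b, Δ, C => ∃ i : ℕ, Sat b (shiftA Δ C i) C ∧ ∀ k < i, Sat a (shiftA Δ C k) C
  | ctx C' _ ψ, Δ, _ => Sat ψ Δ C'

/-- Trace variables occurring in a quantifier-free HyperLTL_C formula. -/
def vars {AP V : Type} : HCQF AP V → Set V
  | tt => ∅
  | atom _ x => {x}
  | neg ψ => vars ψ
  | conj a b => vars a ∪ vars b
  | next ψ => vars ψ
  | untl a b => vars a ∪ vars b
  | ctx _ _ ψ => vars ψ

/-- The set of subformulas of a quantifier-free HyperLTL_C formula. -/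
def subf {AP V : Type} : HCQF AP V → Set (HCQF AP V)
  | tt => {tt}
  | atom p x => {atom p x}
  | neg ψ => insert (neg ψ) (subf ψ)
  | conj a b => insert (conj a b) (subf a ∪ subf b)
  | next ψ => insert (next ψ) (subf ψ)
  | untl a b => insert (untl a b) (subf a ∪ subf b)
  | ctx C h ψ => insert (ctx C h ψ) (subf ψ)

/-- The size of a formula: its number of distinct subformulas. -/
noncomputable def size {AP V : Type} (ψ : HCQF AP V) : ℕ := ψ.subf.ncard

/-- Nesting depth of context modalities. -/
def ctxDepth {AP V : Type} : HCQF AP V → ℕ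
  | tt => 0
  | atom _ _ => 0
  | neg ψ => ctxDepth ψ
  | conj a b => max (ctxDepth a) (ctxDepth b)
  | next ψ => ctxDepth ψ
  | untl a b => max (ctxDepth a) (ctxDepth b)
  | ctx _ _ ψ => ctxDepth ψ + 1

/-- Auxiliary predicate for the bounded fragment. `glob` is the set of all trace
variables occurring in the formula of interest (a context `C` is global iff
`glob ⊆ C`); the flag records whether the current position is in the scope of a
non-global context modality, where only the temporal modality `X` is allowed. -/
def BoundedAux {AP V : Type} (glob : Set V) : Bool → HCQF AP V → Prop
  | _, tt => True
  | _, atom _ _ => True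
  | t, neg ψ => BoundedAux glob t ψ
  | t, conj a b => BoundedAux glob t a ∧ BoundedAux glob t b
  | t, next ψ => BoundedAux glob t ψ
  | false, untl a b => BoundedAux glob false a ∧ BoundedAux glob false b
  | true, untl _ _ => False
  | t, ctx C _ ψ => (glob ⊆ C → BoundedAux glob false ψ) ∧
                    (¬ glob ⊆ C → BoundedAux glob true ψ)

/-- `ψ` is bounded: the only temporal modality occurring in (the scope of) a
non-global context is the next modality `X`. -/
def IsBounded {AP V : Type} (ψ : HCQF AP V) : Prop := BoundedAux ψ.vars false ψ

/-- Auxiliary predicate for the fragment where each temporal modality occurring in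
(the scope of) a non-global context is the eventually modality `F` (i.e. `⊤ U ·`). -/
def FOnlyAux {AP V : Type} (glob : Set V) : Bool → HCQF AP V → Prop
  | _, tt => True
  | _, atom _ _ => True
  | t, neg ψ => FOnlyAux glob t ψ
  | t, conj a b => FOnlyAux glob t a ∧ FOnlyAux glob t b
  | false, next ψ => FOnlyAux glob false ψ
  | true, next _ => False
  | false, untl a b => FOnlyAux glob false a ∧ FOnlyAux glob false b
  | true, untl a b => a = tt ∧ FOnlyAux glob true b
  | t, ctx C _ ψ => (glob ⊆ C → FOnlyAux glob false ψ) ∧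
                    (¬ glob ⊆ C → FOnlyAux glob true ψ)

/-- Every temporal modality occurring in the scope of a non-global context
modality is the eventually modality `F`. -/
def FOnlyInNonGlobal {AP V : Type} (glob : Set V) (ψ : HCQF AP V) : Prop :=
  FOnlyAux glob false ψ

end HCQF

/-- A HyperLTL_C sentence: a quantifier prefix and a quantifier-free matrix. -/
structure HCSentence (AP V : Type) : Type where
  pre : List (Quant × V)
  matrix : HCQF AP V

/-- The sentence is closed: quantified variables are pairwise distinct and every
trace variable of the matrix is bound by the prefix. -/
def HCSentence.Closed {AP V : Type} (φ : HCSentence AP V) : Prop :=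
  (φ.pre.map Prod.snd).Nodup ∧ ∀ x ∈ φ.matrix.vars, x ∈ φ.pre.map Prod.snd

/-- `L ⊨ φ` for a HyperLTL_C sentence `φ` and a set `L` of traces
(the matrix is evaluated in the global context `VAR`). -/
def HCSentence.Models {AP V : Type} [DecidableEq V] (φ : HCSentence AP V)
    (L : Set (Trace AP)) : Prop :=
  ∀ Δ₀ : PTA AP V, SatPfx L φ.pre (fun Δ => φ.matrix.Sat Δ Set.univ) Δ₀

/-- An instance of Post's Correspondence Problem over the alphabet `A`:
`2 * n` nonempty finite words. -/
structure PCPInstance (A : Type) : Type where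
  n : ℕ
  npos : 0 < n
  word : Fin 2 → Fin n → List A
  ne : ∀ (ℓ : Fin 2) (i : Fin n), word ℓ i ≠ []

/-- The PCP instance has a solution. -/
def PCPInstance.HasSolution {A : Type} (P : PCPInstance A) : Prop :=
  ∃ is : List (Fin P.n), is ≠ [] ∧
    (is.map (P.word 0)).flatten = (is.map (P.word 1)).flatten

/-- Atomic propositions used in the PCP reduction:
`AP = Σ ∪ {#} ∪ {p₁,…,pₙ} ∪ {q₁,q₂}`. -/
inductive PCPAP (A : Type) (n : ℕ) : Type where
  | sym  : A → PCPAP A n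
  | hash : PCPAP A n
  | pvar : Fin n → PCPAP A n
  | qvar : Fin 2 → PCPAP A n
deriving DecidableEq

/-- `[u, p_i, q_ℓ]` : the word `u` marked with `p_i` and `q_ℓ`, whose last letter is
additionally marked with `#`. -/
def markWord {A : Type} {n : ℕ} (i : Fin n) (ℓ : Fin 2) : List A → List (Set (PCPAP A n))
  | [] => []
  | [a] => [{PCPAP.sym a, PCPAP.pvar i, PCPAP.qvar ℓ, PCPAP.hash}]
  | a :: b :: rest => ({PCPAP.sym a, PCPAP.pvar i, PCPAP.qvar ℓ} : Set (PCPAP A n)) ::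
      markWord i ℓ (b :: rest)

/-- The trace consisting of the finite word `l` followed by the trace `tail`. -/
def listToTrace {A : Type} (l : List (Set A)) (tail : Trace A) : Trace A :=
  fun k => if h : k < l.length then l.get ⟨k, h⟩ else tail (k - l.length)

/-- The well-formed trace `π^ℓ_{i₁,…,i_k} = {#}·[u^ℓ_{i₁},p_{i₁},q_ℓ]⋯[u^ℓ_{i_k},p_{i_k},q_ℓ]·{#}^ω`. -/
def wfTrace {A : Type} (P : PCPInstance A) (ℓ : Fin 2) (is : List (Fin P.n)) :
    Trace (PCPAP A P.n) :=
  listToTrace (({PCPAP.hash} : Set (PCPAP A P.n)) ::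
      (is.map fun i => markWord i ℓ (P.word ℓ i)).flatten)
    (fun _ => {PCPAP.hash})

/-- A well-formed trace for the PCP instance `P`. -/
def IsWellFormed {A : Type} (P : PCPInstance A) (π : Trace (PCPAP A P.n)) : Prop :=
  ∃ (ℓ : Fin 2) (is : List (Fin P.n)), is ≠ [] ∧ π = wfTrace P ℓ is

/-- The set `Γ = {#, p₁, …, pₙ}` of atomic propositions. -/
def pcpGammaProp (A : Type) (n : ℕ) : Set (PCPAP A n) :=
  {x | x = PCPAP.hash ∨ ∃ i : Fin n, x = PCPAP.pvar i}

/-- The set `Γ = {#, p₁, …, pₙ}` regarded as a set of LTL formulas. -/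
def pcpGammaLTL (A : Type) (n : ℕ) : Set (LTL (PCPAP A n)) :=
  LTL.atom '' pcpGammaProp A n

/-- The set `Γ = {#, p₁, …, pₙ}` as a finite set of LTL formulas. -/
def pcpGammaFinset (A : Type) [DecidableEq A] (n : ℕ) : Finset (LTL (PCPAP A n)) :=
  insert (LTL.atom PCPAP.hash)
    ((Finset.univ : Finset (Fin n)).image fun i => LTL.atom (PCPAP.pvar i))

/-- Instructions of a Minsky 2-counter machine. -/
inductive MOp : Type where
  | inc  : MOp
  | dec  : MOp
  | zero : MOp
deriving DecidableEq

/-- A Minsky 2-counter machine (locations are `Fin nQ`; no transition leaves the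
halting location). -/
structure Minsky : Type where
  nQ : ℕ
  qinit : Fin nQ
  qhalt : Fin nQ
  trans : Set (Fin nQ × (MOp × Fin 2) × Fin nQ)
  halt_no_out : ∀ q op q', (q, op, q') ∈ trans → q ≠ qhalt

/-- The one-step relation between configurations of a Minsky machine. -/
def Minsky.Step (M : Minsky) (c c' : Fin M.nQ × (Fin 2 → ℕ)) : Prop :=
  ∃ (op : MOp) (cnt : Fin 2), (c.1, (op, cnt), c'.1) ∈ M.trans ∧
    (∀ d : Fin 2, d ≠ cnt → c'.2 d = c.2 d) ∧
    (match op with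
      | MOp.inc => c'.2 cnt = c.2 cnt + 1
      | MOp.dec => 0 < c.2 cnt ∧ c'.2 cnt + 1 = c.2 cnt
      | MOp.zero => c.2 cnt = 0 ∧ c'.2 cnt = 0)

/-- The machine halts: some computation from the initial configuration reaches the
halting location. -/
def Minsky.Halts (M : Minsky) : Prop :=
  ∃ c : Fin M.nQ × (Fin 2 → ℕ),
    Relation.ReflTransGen M.Step (M.qinit, fun _ => 0) c ∧ c.1 = M.qhalt

/-- Projection of a trace over `AP ⊕ B` onto `AP`. -/
def projSum {AP B : Type} (w : Trace (AP ⊕ B)) : Trace AP :=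
  fun i => {p | Sum.inl p ∈ w i}

/-- The proposition `at(θ)` associated with an LTL formula (`at(p) = p` for atoms). -/
def atProp {AP : Type} : LTL AP → AP ⊕ LTL AP
  | LTL.atom p => Sum.inl p
  | θ => Sum.inr θ


-- ===================== auxiliary development =====================


lemma sat_alw_ev_atom {AP' : Type} (a : AP') (w : Trace AP') :
    (LTL.alw (LTL.ev (LTL.atom a))).Sat w 0 ↔ ∀ N, ∃ i, N ≤ i ∧ a ∈ w i := by
  simp only [LTL.alw, LTL.ev, LTL.Sat]
  constructor
  · intro h N
    by_contra hc
    push_neg at hc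
    exact h ⟨N, Nat.zero_le _, fun h' => by
      obtain ⟨j, hj, hja, _⟩ := h'
      exact hc j hj hja, fun k _ _ => trivial⟩
  · intro h hc
    obtain ⟨j, -, hj, -⟩ := hc
    obtain ⟨i, hi, ha⟩ := h j
    exact hj ⟨i, hi, ha, fun k _ _ => trivial⟩

lemma profDiff_atoms {AP : Type} (Γ : Set AP) (π : Trace AP) (i j : ℕ) :
    profDiff (LTL.atom '' Γ) π i j ↔ Γ ∩ π i ≠ Γ ∩ π j := by
  constructor
  · rintro ⟨θ, ⟨p, hp, rfl⟩, hne⟩ heq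
    simp only [LTL.Sat] at hne
    apply hne
    constructor
    · intro h; have : p ∈ Γ ∩ π i := ⟨hp, h⟩; rw [heq] at this; exact this.2
    · intro h; have : p ∈ Γ ∩ π j := ⟨hp, h⟩; rw [← heq] at this; exact this.2
  · intro hne
    by_contra hc
    apply hne
    ext p
    constructor
    · rintro ⟨hp, hpi⟩
      refine ⟨hp, ?_⟩
      by_contra hpj
      exact hc ⟨LTL.atom p, ⟨p, hp, rfl⟩, by simp only [LTL.Sat]; tauto⟩
    · rintro ⟨hp, hpj⟩
      refine ⟨hp, ?_⟩
      by_contra hpi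
      exact hc ⟨LTL.atom p, ⟨p, hp, rfl⟩, by simp only [LTL.Sat]; tauto⟩

lemma succPos_eq {AP : Type} {Γ : Set (LTL AP)} {π : Trace AP} {i J : ℕ}
    (hJ : i < J) (hd : profDiff Γ π i J)
    (hmin : ∀ j, i < j → j < J → ¬ profDiff Γ π i j) : succPos Γ π i = J := by
  have h : ∃ j, i < j ∧ profDiff Γ π i j := ⟨J, hJ, hd⟩
  rw [succPos, dif_pos h]
  have h1 := Nat.find_spec h
  have h2 := Nat.find_min' h (m := J) ⟨hJ, hd⟩
  rcases lt_trichotomy (Nat.find h) J with hlt | heq | hgt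
  · exact absurd h1.2 (hmin _ h1.1 hlt)
  · exact heq
  · omega

lemma succPos_none {AP : Type} {Γ : Set (LTL AP)} {π : Trace AP} {i : ℕ}
    (h : ∀ j, i < j → ¬ profDiff Γ π i j) : succPos Γ π i = i + 1 := by
  rw [succPos, dif_neg]
  rintro ⟨j, hj, hd⟩
  exact h j hj hd

lemma lt_succPos {AP : Type} (Γ : Set (LTL AP)) (π : Trace AP) (i : ℕ) :
    i < succPos Γ π i := by
  rw [succPos]
  split
  · next h => exact (Nat.find_spec h).1
  · omega

lemma exists_interval {p : ℕ → ℕ} (h0 : p 0 = 0) (hmono : ∀ i, p i < p (i + 1))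
    (q : ℕ) : ∃ i, p i ≤ q ∧ q < p (i + 1) := by
  have hge : ∀ i, i ≤ p i := by
    intro i
    induction i with
    | zero => omega
    | succ n ih => have := hmono n; omega
  have hex : ∃ i, q < p (i + 1) := ⟨q, by have := hge (q + 1); omega⟩
  refine ⟨Nat.find hex, ?_, Nat.find_spec hex⟩
  rcases Nat.eq_zero_or_pos (Nat.find hex) with h | h
  · rw [h, h0]; omega
  · have := Nat.find_min hex (m := Nat.find hex - 1) (by omega)
    push_neg at this
    have : p (Nat.find hex - 1 + 1) ≤ q := this
    have he : Nat.find hex - 1 + 1 = Nat.find hex := by omega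
    rwa [he] at this

lemma interval_unique {p : ℕ → ℕ} (hmono : ∀ i, p i < p (i + 1)) {q i i' : ℕ}
    (h1 : p i ≤ q) (h2 : q < p (i + 1)) (h1' : p i' ≤ q) (h2' : q < p (i' + 1)) :
    i = i' := by
  have hm : Monotone p := monotone_nat_of_le_succ (fun n => (hmono n).le)
  by_contra hne
  rcases Nat.lt_or_ge i i' with h | h
  · have := hm (show i + 1 ≤ i' from h); omega
  · have : i' < i := by omega
    have := hm (show i' + 1 ≤ i from this); omega

section StutterConstruction

variable {AP S : Type}

/-- acc-marker component of a valuation. -/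
def accSet (AP : Type) (c : Prop) : Set (AP ⊕ Unit) := {x | x = Sum.inr () ∧ c}

/-- Nodes of the constructed Kripke structure: jump nodes `(s, b)`,
copy nodes `some s`, and a sink `none`. -/
abbrev CNode (S : Type) : Type := (S × Bool) ⊕ Option S

/-- A jump witness: a path from `s` to `s'` along which the `Γ`-valuation is
constant and then changes at `s'`; if `b' = true` it must visit `F`. -/
def Wit (K : Kripke AP S) (F : Set S) (Γ : Set AP) (s s' : S) (b' : Bool) : Prop :=
  ∃ k, 1 ≤ k ∧ ∃ t : ℕ → S, t 0 = s ∧ t k = s' ∧ (∀ j < k, (t j, t (j + 1)) ∈ K.E) ∧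
    (∀ j < k, Γ ∩ K.V (t j) = Γ ∩ K.V s) ∧ Γ ∩ K.V s' ≠ Γ ∩ K.V s ∧
    (b' = true → ∃ j, 1 ≤ j ∧ j ≤ k ∧ t j ∈ F)

def hatV (K : Kripke AP S) (F : Set S) : CNode S → Set (AP ⊕ Unit)
  | Sum.inl (s, b) => Sum.inl '' K.V s ∪ accSet AP (b = true)
  | Sum.inr (some s) => Sum.inl '' K.V s ∪ accSet AP (s ∈ F)
  | Sum.inr none => ∅

def hatERel (K : Kripke AP S) (F : Set S) (Γ : Set AP) : CNode S → CNode S → Prop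
  | Sum.inl (s, _), Sum.inl (s', b') => Wit K F Γ s s' b'
  | Sum.inl (s, _), Sum.inr (some s') => Wit K F Γ s s' false
  | Sum.inr (some s), Sum.inr (some s') => (s, s') ∈ K.E ∧ Γ ∩ K.V s' = Γ ∩ K.V s
  | _, Sum.inr none => True
  | _, _ => False

lemma proj_hatV_aux (v : Set AP) (c : Prop) :
    {p : AP | Sum.inl p ∈ Sum.inl '' v ∪ accSet AP c} = v := by
  ext p
  simp [accSet]

lemma acc_hatV_aux (v : Set AP) (c : Prop) :
    (Sum.inr () ∈ Sum.inl '' v ∪ accSet AP c) ↔ c := by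
  simp [accSet]

def hatK (K : Kripke AP S) (F : Set S) (Γ : Set AP) : Kripke (AP ⊕ Unit) (CNode S) where
  init := {x | ∃ s ∈ K.init, x = Sum.inl (s, false) ∨ x = Sum.inr (some s)}
  E := {p | hatERel K F Γ p.1 p.2}
  total := fun x => ⟨Sum.inr none, by
    rcases x with ⟨s, b⟩ | (_ | s) <;> simp [hatERel]⟩
  V := hatV K F

/-- Glue a sequence of segments into a single infinite path. -/
noncomputable def glue (p : ℕ → ℕ) (t : ℕ → ℕ → S) (d : S) (q : ℕ) : S :=
  if h : ∃ i, q < p (i + 1) then t (Nat.find h) (q - p (Nat.find h)) else d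

lemma glue_eq {p : ℕ → ℕ} (h0 : p 0 = 0) (hmono : ∀ i, p i < p (i + 1))
    (t : ℕ → ℕ → S) (d : S) {i q : ℕ} (h1 : p i ≤ q) (h2 : q < p (i + 1)) :
    glue p t d q = t i (q - p i) := by
  have h : ∃ i, q < p (i + 1) := ⟨i, h2⟩
  rw [glue, dif_pos h]
  have hle : p (Nat.find h) ≤ q := by
    rcases Nat.eq_zero_or_pos (Nat.find h) with hz | hpos
    · rw [hz, h0]; omega
    · have := Nat.find_min h (m := Nat.find h - 1) (by omega)
      push_neg at this
      have h' : p (Nat.find h - 1 + 1) ≤ q := this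
      have he : Nat.find h - 1 + 1 = Nat.find h := by omega
      rwa [he] at h'
  have : Nat.find h = i := interval_unique hmono hle (Nat.find_spec h) h1 h2
  rw [this]

lemma exists_finKripke {AP S : Type} [Fintype S] (K : Kripke AP S) :
    ∃ K' : FinKripke AP, K'.Lang = K.Lang := by
  classical
  let e := Fintype.equivFin S
  refine ⟨⟨Fintype.card S,
    { init := {x | e.symm x ∈ K.init},
      E := {p | (e.symm p.1, e.symm p.2) ∈ K.E},
      total := fun s => by
        obtain ⟨t, ht⟩ := K.total (e.symm s)
        exact ⟨e t, by simpa using ht⟩,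
      V := fun x => K.V (e.symm x) }⟩, ?_⟩
  ext π
  constructor
  · rintro ⟨ν, ⟨h0, hE⟩, rfl⟩
    exact ⟨fun i => e.symm (ν i), ⟨h0, hE⟩, rfl⟩
  · rintro ⟨ν, ⟨h0, hE⟩, rfl⟩
    refine ⟨fun i => e (ν i), ⟨by simpa using h0, fun i => by simpa using hE i⟩, by simp⟩

theorem main_stutter (K : Kripke AP S) (F : Set S) (Γ : Set AP) :
    stfr (LTL.atom '' Γ) '' (K.FairLang F) =
      {π : Trace AP | ∃ w ∈ (hatK K F Γ).Lang,
        (LTL.alw (LTL.ev (LTL.atom (Sum.inr ())))).Sat w 0 ∧ projSum w = π} := by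
  apply Set.Subset.antisymm
  · rintro τ ⟨π, ⟨ν, ⟨hinit, hE⟩, hfair, rfl⟩, rfl⟩
    classical
    set π : Trace AP := fun i => K.V (ν i) with hπdef
    set Γ' : Set (LTL AP) := LTL.atom '' Γ with hΓ'
    set p : ℕ → ℕ := stfrNth Γ' π with hpdef
    have hp0 : p 0 = 0 := rfl
    have hps : ∀ i, p (i + 1) = succPos Γ' π (p i) := fun i => rfl
    have hmono : ∀ i, p i < p (i + 1) := fun i => by
      rw [hps i]; exact lt_succPos _ _ _
    have hpmon : Monotone p := monotone_nat_of_le_succ (fun n => (hmono n).le)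
    have hpsm : StrictMono p := strictMono_nat_of_lt_succ hmono
    have hpge : ∀ i, i ≤ p i := by
      intro i
      induction i with
      | zero => omega
      | succ n ih => have := hmono n; omega
    set Chg : ℕ → Prop := fun i => ∃ j, p i < j ∧ profDiff Γ' π (p i) j with hChgdef
    have hpfind : ∀ i (h : Chg i), p (i + 1) = Nat.find h := by
      intro i h
      rw [hps i, succPos, dif_pos h]
    have hchgd : ∀ i, Chg i → Γ ∩ π (p (i + 1)) ≠ Γ ∩ π (p i) := by
      intro i h
      have := (Nat.find_spec h).2
      rw [← hpfind i h] at this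
      rw [hΓ', profDiff_atoms] at this
      exact this.symm
    have hchgc : ∀ i, Chg i → ∀ j, p i ≤ j → j < p (i + 1) → Γ ∩ π j = Γ ∩ π (p i) := by
      intro i h j hj1 hj2
      rcases eq_or_lt_of_le hj1 with rfl | hj1
      · rfl
      · have := Nat.find_min h (m := j) (by rw [← hpfind i h]; exact hj2)
        rw [not_and] at this
        have := this hj1
        rw [hΓ', profDiff_atoms, ne_eq, not_not] at this
        exact this.symm
    have hnochg : ∀ i, ¬ Chg i → (p (i + 1) = p i + 1 ∧ ∀ q, p i ≤ q → Γ ∩ π q = Γ ∩ π (p i)) := by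
      intro i h
      have hno : ∀ j, p i < j → ¬ profDiff Γ' π (p i) j := by
        intro j hj hd
        exact h ⟨j, hj, hd⟩
      constructor
      · rw [hps i]; exact succPos_none hno
      · intro q hq
        rcases eq_or_lt_of_le hq with rfl | hq
        · rfl
        · have := hno q hq
          rw [hΓ', profDiff_atoms, ne_eq, not_not] at this
          exact this.symm
    have hnochg_up : ∀ i, ¬ Chg i → ¬ Chg (i + 1) := by
      intro i h hc
      obtain ⟨hstep, hconst⟩ := hnochg i h
      obtain ⟨j, hj, hd⟩ := hc
      rw [hΓ', profDiff_atoms] at hd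
      apply hd
      rw [hconst (p (i + 1)) (by omega), hconst j (by omega)]
    have hnochg_ge : ∀ m, ¬ Chg m → ∀ l, m ≤ l → ¬ Chg l := by
      intro m hm l hl
      induction l with
      | zero => have : m = 0 := by omega
                rwa [this] at hm
      | succ n ih =>
        rcases Nat.lt_or_ge m (n + 1) with h | h
        · exact hnochg_up n (ih (by omega))
        · have : m = n + 1 := by omega
          rwa [this] at hm
    set b : ℕ → Bool := fun l =>
      if 0 < l ∧ ∃ q, p (l - 1) < q ∧ q ≤ p l ∧ ν q ∈ F then true else false with hbdef
    have hbtrue : ∀ l, b l = true → 0 < l ∧ ∃ q, p (l - 1) < q ∧ q ≤ p l ∧ ν q ∈ F := by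
      intro l hb
      by_contra hc
      rw [hbdef] at hb
      simp only [if_neg hc] at hb
      exact Bool.false_ne_true hb
    set Mu : ℕ → CNode S := fun i =>
      if Chg i then Sum.inl (ν (p i), b i) else Sum.inr (some (ν (p i))) with hMudef
    have hwit : ∀ i, Chg i → ∀ b' : Bool,
        (b' = true → ∃ q, p i < q ∧ q ≤ p (i + 1) ∧ ν q ∈ F) →
        Wit K F Γ (ν (p i)) (ν (p (i + 1))) b' := by
      intro i hc b' hb'
      have hm := hmono i
      refine ⟨p (i + 1) - p i, by omega, fun j => ν (p i + j), rfl,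
        congrArg ν (by omega), fun j hj => hE (p i + j), ?_, ?_, ?_⟩
      · intro j hj
        show Γ ∩ π (p i + j) = Γ ∩ π (p i)
        exact hchgc i hc (p i + j) (by omega) (by omega)
      · show Γ ∩ π (p (i + 1)) ≠ Γ ∩ π (p i)
        exact hchgd i hc
      · intro hb
        obtain ⟨q, hq1, hq2, hqF⟩ := hb' hb
        refine ⟨q - p i, by omega, by omega, ?_⟩
        show ν (p i + (q - p i)) ∈ F
        rw [show p i + (q - p i) = q by omega]
        exact hqF
    refine ⟨fun i => hatV K F (Mu i), ⟨Mu, ⟨?_, ?_⟩, rfl⟩, ?_, ?_⟩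
    · -- initial state
      refine ⟨ν 0, hinit, ?_⟩
      rw [hMudef]
      have hb0 : b 0 = false := by rw [hbdef]; simp
      by_cases hc : Chg 0
      · left; simp only [if_pos hc, hp0, hb0]
      · right; simp only [if_neg hc, hp0]
    · -- transitions
      intro i
      show hatERel K F Γ (Mu i) (Mu (i + 1))
      by_cases hci : Chg i
      · by_cases hci1 : Chg (i + 1)
        · rw [hMudef]
          simp only [if_pos hci, if_pos hci1]
          show Wit K F Γ (ν (p i)) (ν (p (i + 1))) (b (i + 1))
          refine hwit i hci _ ?_
          intro hb
          obtain ⟨-, q, hq1, hq2, hqF⟩ := hbtrue (i + 1) hb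
          exact ⟨q, by simpa using hq1, by simpa using hq2, hqF⟩
        · rw [hMudef]
          simp only [if_pos hci, if_neg hci1]
          show Wit K F Γ (ν (p i)) (ν (p (i + 1))) false
          exact hwit i hci false (by simp)
      · have hci1 : ¬ Chg (i + 1) := hnochg_up i hci
        obtain ⟨hstep, hconst⟩ := hnochg i hci
        rw [hMudef]
        simp only [if_neg hci, if_neg hci1]
        show (ν (p i), ν (p (i + 1))) ∈ K.E ∧ Γ ∩ K.V (ν (p (i + 1))) = Γ ∩ K.V (ν (p i))
        constructor
        · rw [hstep]; exact hE (p i)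
        · exact hconst (p (i + 1)) (by omega)
    · -- the LTL formula holds
      rw [sat_alw_ev_atom]
      intro N
      by_cases hall : ∀ i, Chg i
      · obtain ⟨q₀, hq₀, hq₀F⟩ := hfair (p N + 1)
        obtain ⟨i, hi1, hi2⟩ := exists_interval hp0 hmono (q₀ - 1)
        have hq₀pos : 1 ≤ q₀ := by have := hpge N; omega
        have hNi : N ≤ i + 1 := by
          by_contra hcon
          push_neg at hcon
          have := hpmon (show i + 1 ≤ N by omega)
          omega
        refine ⟨i + 1, hNi, ?_⟩
        have hb : b (i + 1) = true := by
          rw [hbdef]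
          simp only [Nat.add_sub_cancel]
          rw [if_pos ⟨by omega, q₀, by omega, by omega, hq₀F⟩]
        rw [hMudef]
        simp only [if_pos (hall (i + 1))]
        show Sum.inr () ∈ hatV K F (Sum.inl (ν (p (i + 1)), b (i + 1)))
        show Sum.inr () ∈ Sum.inl '' K.V (ν (p (i + 1))) ∪ accSet AP (b (i + 1) = true)
        rw [acc_hatV_aux]
        exact hb
      · push_neg at hall
        obtain ⟨m, hm⟩ := hall
        have hge := hnochg_ge m hm
        have hplin : ∀ d, p (m + d) = p m + d := by
          intro d
          induction d with
          | zero => rfl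
          | succ n ih =>
            have := (hnochg (m + n) (hge (m + n) (by omega))).1
            rw [show m + (n + 1) = (m + n) + 1 by omega, this, ih]
            omega
        obtain ⟨q₀, hq₀, hq₀F⟩ := hfair (p (max N m))
        have hq₀m : p m ≤ q₀ := le_trans (hpmon (le_max_right N m)) hq₀
        set i := m + (q₀ - p m) with hidef
        have hpi : p i = q₀ := by rw [hidef, hplin]; omega
        have hiN : N ≤ i := by
          by_contra hcon
          push_neg at hcon
          have := hpsm (show i < max N m by omega)
          omega
        refine ⟨i, hiN, ?_⟩
        have hci : ¬ Chg i := hge i (by omega)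
        rw [hMudef]
        simp only [if_neg hci]
        show Sum.inr () ∈ hatV K F (Sum.inr (some (ν (p i))))
        show Sum.inr () ∈ Sum.inl '' K.V (ν (p i)) ∪ accSet AP (ν (p i) ∈ F)
        rw [acc_hatV_aux, hpi]
        exact hq₀F
    · -- projection
      funext l
      show {a | Sum.inl a ∈ hatV K F (Mu l)} = π (p l)
      rw [hMudef]
      by_cases hc : Chg l
      · simp only [if_pos hc]
        show {a | Sum.inl a ∈ Sum.inl '' K.V (ν (p l)) ∪ accSet AP (b l = true)} = π (p l)
        rw [proj_hatV_aux]
      · simp only [if_neg hc]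
        show {a | Sum.inl a ∈ Sum.inl '' K.V (ν (p l)) ∪ accSet AP (ν (p l) ∈ F)} = π (p l)
        rw [proj_hatV_aux]
  · rintro τ ⟨w, ⟨μ, ⟨hinit, hE⟩, rfl⟩, hθ, rfl⟩
    classical
    rw [sat_alw_ev_atom] at hθ
    have hsinkstep : ∀ l, μ l = Sum.inr none → μ (l + 1) = Sum.inr none := by
      intro l hl
      have h : hatERel K F Γ (μ l) (μ (l + 1)) := hE l
      rw [hl] at h
      cases hml : μ (l + 1) with
      | inl sb =>
        rcases sb with ⟨s', b'⟩
        rw [hml] at h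
        simp [hatERel] at h
      | inr o =>
        cases o with
        | none => rfl
        | some s' =>
          rw [hml] at h
          simp [hatERel] at h
    have hnosink : ∀ l, μ l ≠ Sum.inr none := by
      intro l hl
      have hall : ∀ d, μ (l + d) = Sum.inr none := by
        intro d
        induction d with
        | zero => exact hl
        | succ n ih => exact hsinkstep _ ih
      obtain ⟨l', hl', hacc⟩ := hθ l
      have hμ : μ l' = Sum.inr none := by
        rw [show l' = l + (l' - l) by omega]
        exact hall _
      have : Sum.inr () ∈ hatV K F (Sum.inr (none : Option S)) := by rw [← hμ]; exact hacc
      simp [hatV] at this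
    have hS : Nonempty S := by
      cases h0 : μ 0 with
      | inl sb => exact ⟨sb.1⟩
      | inr o =>
        cases o with
        | none => exact absurd h0 (hnosink 0)
        | some s => exact ⟨s⟩
    obtain ⟨s₀⟩ := hS
    set stt : ℕ → S := fun l => match μ l with
      | Sum.inl (s, _) => s
      | Sum.inr (some s) => s
      | Sum.inr none => s₀ with hsttdef
    set bb : ℕ → Bool := fun l => match μ l with
      | Sum.inl (_, bv) => bv
      | _ => false with hbbdef
    have hstt : ∀ l s bv, μ l = Sum.inl (s, bv) → stt l = s ∧ bb l = bv := by
      intro l s bv h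
      rw [hsttdef, hbbdef]
      simp only [h]
      exact ⟨trivial, trivial⟩
    have hstt2 : ∀ l s, μ l = Sum.inr (some s) → stt l = s ∧ bb l = false := by
      intro l s h
      rw [hsttdef, hbbdef]
      simp only [h]
      exact ⟨trivial, trivial⟩
    set P : ℕ → Prop := fun l => ∃ s, μ l = Sum.inr (some s) with hPdef
    have hshape : ∀ l, (¬ P l ∧ μ l = Sum.inl (stt l, bb l)) ∨
        (P l ∧ μ l = Sum.inr (some (stt l))) := by
      intro l
      cases hml : μ l with
      | inl sb =>
        rcases sb with ⟨s, bv⟩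
        obtain ⟨h1, h2⟩ := hstt l s bv hml
        left
        refine ⟨?_, by rw [h1, h2]⟩
        rintro ⟨s', hs'⟩
        rw [hml] at hs'
        cases hs'
      | inr o =>
        cases o with
        | none => exact absurd hml (hnosink l)
        | some s =>
          right
          refine ⟨⟨s, hml⟩, ?_⟩
          rw [(hstt2 l s hml).1]
    have hPup : ∀ l, P l → P (l + 1) := by
      rintro l ⟨s, hs⟩
      have h : hatERel K F Γ (μ l) (μ (l + 1)) := hE l
      rw [hs] at h
      cases hml : μ (l + 1) with
      | inl sb =>
        rcases sb with ⟨s', b'⟩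
        rw [hml] at h
        simp [hatERel] at h
      | inr o =>
        cases o with
        | none => exact absurd hml (hnosink (l + 1))
        | some s' => exact ⟨s', hml⟩
    have hPge : ∀ m, P m → ∀ l, m ≤ l → P l := by
      intro m hm l hl
      induction l with
      | zero => have : m = 0 := by omega
                rwa [this] at hm
      | succ n ih =>
        rcases Nat.lt_or_ge m (n + 1) with h | h
        · exact hPup n (ih (by omega))
        · have : m = n + 1 := by omega
          rwa [this] at hm
    have hkt : ∀ l, ∃ k, 1 ≤ k ∧ ∃ t : ℕ → S, t 0 = stt l ∧ t k = stt (l + 1) ∧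
        (∀ j < k, (t j, t (j + 1)) ∈ K.E) ∧
        (¬ P l → ((∀ j < k, Γ ∩ K.V (t j) = Γ ∩ K.V (stt l)) ∧
          Γ ∩ K.V (stt (l + 1)) ≠ Γ ∩ K.V (stt l) ∧
          (bb (l + 1) = true → ∃ j, 1 ≤ j ∧ j ≤ k ∧ t j ∈ F))) ∧
        (P l → (k = 1 ∧ Γ ∩ K.V (stt (l + 1)) = Γ ∩ K.V (stt l))) := by
      intro l
      have h : hatERel K F Γ (μ l) (μ (l + 1)) := hE l
      rcases hshape l with ⟨hnp, hml⟩ | ⟨hp, hml⟩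
      · rcases hshape (l + 1) with ⟨hnp1, hml1⟩ | ⟨hp1, hml1⟩
        · rw [hml, hml1] at h
          have hw : Wit K F Γ (stt l) (stt (l + 1)) (bb (l + 1)) := h
          obtain ⟨k, hk, t, ht0, htk, hte, htc, htd, htF⟩ := hw
          exact ⟨k, hk, t, ht0, htk, hte, fun _ => ⟨htc, htd, fun hb => htF hb⟩,
            fun hp => absurd hp hnp⟩
        · rw [hml, hml1] at h
          have hw : Wit K F Γ (stt l) (stt (l + 1)) false := h
          obtain ⟨k, hk, t, ht0, htk, hte, htc, htd, -⟩ := hw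
          refine ⟨k, hk, t, ht0, htk, hte, fun _ => ⟨htc, htd, fun hb => ?_⟩,
            fun hp => absurd hp hnp⟩
          obtain ⟨s, hs⟩ := hp1
          rw [(hstt2 (l + 1) s hs).2] at hb
          exact absurd hb Bool.false_ne_true
      · have hp1 := hPup l hp
        rcases hshape (l + 1) with ⟨hnp1, -⟩ | ⟨-, hml1⟩
        · exact absurd hp1 hnp1
        · rw [hml, hml1] at h
          have hw : (stt l, stt (l + 1)) ∈ K.E ∧ Γ ∩ K.V (stt (l + 1)) = Γ ∩ K.V (stt l) := h
          refine ⟨1, le_refl 1, fun j => if j = 0 then stt l else stt (l + 1),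
            if_pos rfl, if_neg one_ne_zero, ?_, fun hnp => absurd hp hnp,
            fun _ => ⟨rfl, hw.2⟩⟩
          intro j hj
          have hj0 : j = 0 := by omega
          subst hj0
          simpa using hw.1
    choose k hk1 t ht0 htk hte hjump hcopy using hkt
    set p : ℕ → ℕ := fun l => Nat.rec (motive := fun _ => ℕ) 0 (fun i acc => acc + k i) l
      with hpdef
    have hp0 : p 0 = 0 := rfl
    have hps : ∀ l, p (l + 1) = p l + k l := fun l => rfl
    have hmono : ∀ l, p l < p (l + 1) := fun l => by
      rw [hps]
      have := hk1 l
      omega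
    have hpmon : Monotone p := monotone_nat_of_le_succ (fun n => (hmono n).le)
    have hpsm : StrictMono p := strictMono_nat_of_lt_succ hmono
    have hpge : ∀ i, i ≤ p i := by
      intro i
      induction i with
      | zero => omega
      | succ n ih => have := hmono n; omega
    set ν : ℕ → S := glue p t s₀ with hνdef
    have hseg : ∀ l j, j ≤ k l → ν (p l + j) = t l j := by
      intro l j hj
      rcases eq_or_lt_of_le hj with rfl | hj
      · rw [show p l + k l = p (l + 1) from (hps l).symm, hνdef,
          glue_eq (i := l + 1) (q := p (l + 1)) hp0 hmono t s₀ (le_refl _) (hmono (l + 1)),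
          Nat.sub_self, ht0]
        exact (htk l).symm
      · rw [hνdef, glue_eq hp0 hmono t s₀ (show p l ≤ p l + j by omega)
          (by rw [hps]; omega)]
        congr 1
        omega
    have hνp : ∀ l, ν (p l) = stt l := by
      intro l
      have h := hseg l 0 (by have := hk1 l; omega)
      rw [ht0] at h
      simpa using h
    have hνE : ∀ q, (ν q, ν (q + 1)) ∈ K.E := by
      intro q
      obtain ⟨i, hi1, hi2⟩ := exists_interval hp0 hmono q
      have hkik : q - p i < k i := by have := hps i; omega
      have h1 : ν q = t i (q - p i) := by
        rw [hνdef]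
        exact glue_eq hp0 hmono t s₀ hi1 hi2
      have h2 : ν (q + 1) = t i (q - p i + 1) := by
        rw [show q + 1 = p i + (q - p i + 1) by omega]
        exact hseg i _ (by omega)
      rw [h1, h2]
      exact hte i _ hkik
    have hfair : ∀ N, ∃ q, N ≤ q ∧ ν q ∈ F := by
      intro N
      obtain ⟨l, hl, hacc⟩ := hθ (N + 1)
      rcases hshape l with ⟨hnp, hml⟩ | ⟨hp', hml⟩
      · rw [hml] at hacc
        have hb : bb l = true := by
          have h : Sum.inr () ∈ Sum.inl '' K.V (stt l) ∪ accSet AP (bb l = true) := hacc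
          exact (acc_hatV_aux _ _).mp h
        have hl1 : 1 ≤ l := by omega
        have hnp' : ¬ P (l - 1) := by
          intro hpp
          have := hPup (l - 1) hpp
          rw [show l - 1 + 1 = l by omega] at this
          exact hnp this
        obtain ⟨-, -, hF⟩ := hjump (l - 1) hnp'
        rw [show l - 1 + 1 = l by omega] at hF
        obtain ⟨j, hj1, hj2, hjF⟩ := hF hb
        refine ⟨p (l - 1) + j, ?_, ?_⟩
        · have := hpge (l - 1); omega
        · rw [hseg (l - 1) j hj2]
          exact hjF
      · rw [hml] at hacc
        have hsF : stt l ∈ F := by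
          have h : Sum.inr () ∈ Sum.inl '' K.V (stt l) ∪ accSet AP (stt l ∈ F) := hacc
          exact (acc_hatV_aux _ _).mp h
        refine ⟨p l, by have := hpge l; omega, ?_⟩
        rw [hνp l]
        exact hsF
    set π : Trace AP := fun q => K.V (ν q) with hπdef
    set Γ' : Set (LTL AP) := LTL.atom '' Γ with hΓ'
    have hπp : ∀ l, π (p l) = K.V (stt l) := by
      intro l
      show K.V (ν (p l)) = K.V (stt l)
      rw [hνp l]
    have htail : ∀ n, P n → ∀ q, p n ≤ q → Γ ∩ π q = Γ ∩ π (p n) := by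
      intro n hn
      have hlin : ∀ m, P m → ∀ d, p (m + d) = p m + d := by
        intro m hm d
        induction d with
        | zero => rfl
        | succ e ih =>
          rw [show m + (e + 1) = (m + e) + 1 by omega, hps,
            (hcopy (m + e) (hPge m hm _ (by omega))).1, ih]
          omega
      have hgd : ∀ d, Γ ∩ K.V (stt (n + d)) = Γ ∩ K.V (stt n) := by
        intro d
        induction d with
        | zero => rfl
        | succ e ih =>
          rw [show n + (e + 1) = (n + e) + 1 by omega,
            (hcopy (n + e) (hPge n hn _ (by omega))).2]
          exact ih
      intro q hq
      have hq' : p (n + (q - p n)) = q := by rw [hlin n hn]; omega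
      have hν := hνp (n + (q - p n))
      rw [hq'] at hν
      show Γ ∩ K.V (ν q) = Γ ∩ π (p n)
      rw [hν, hπp n]
      exact hgd (q - p n)
    have hstfr : ∀ l, stfrNth Γ' π l = p l := by
      intro l
      induction l with
      | zero => rfl
      | succ n ih =>
        show succPos Γ' π (stfrNth Γ' π n) = p (n + 1)
        rw [ih]
        by_cases hp' : P n
        · rw [hps n, (hcopy n hp').1]
          apply succPos_none
          intro j hj hd
          rw [hΓ', profDiff_atoms] at hd
          exact hd (htail n hp' j (le_of_lt hj)).symm
        · obtain ⟨hconst, hchange, -⟩ := hjump n hp'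
          apply succPos_eq (hmono n)
          · rw [hΓ', profDiff_atoms, hπp n, hπp (n + 1)]
            exact fun heq => hchange heq.symm
          · intro j hj1 hj2
            rw [hΓ', profDiff_atoms, ne_eq, not_not, hπp n]
            have hν : ν j = t n (j - p n) := by
              rw [hνdef]
              exact glue_eq hp0 hmono t s₀ (le_of_lt hj1) hj2
            show Γ ∩ K.V (stt n) = Γ ∩ K.V (ν j)
            rw [hν]
            exact (hconst (j - p n) (by have := hps n; omega)).symm
    refine ⟨π, ⟨ν, ⟨?_, hνE⟩, hfair, rfl⟩, ?_⟩
    · obtain ⟨s, hs, h⟩ := hinit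
      have hν0 : ν 0 = stt 0 := by
        have h := hνp 0
        rwa [hp0] at h
      rw [hν0]
      rcases h with h | h
      · rw [(hstt 0 s false h).1]
        exact hs
      · rw [(hstt2 0 s h).1]
        exact hs
    · funext l
      show π (stfrNth Γ' π l) = {a | Sum.inl a ∈ hatV K F (μ l)}
      rw [hstfr l]
      rcases hshape l with ⟨-, hml⟩ | ⟨-, hml⟩
      · rw [hml]
        show π (p l) = {a | Sum.inl a ∈ Sum.inl '' K.V (stt l) ∪ accSet AP (bb l = true)}
        rw [proj_hatV_aux, hπp l]
      · rw [hml]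
        show π (p l) = {a | Sum.inl a ∈ Sum.inl '' K.V (stt l) ∪ accSet AP (stt l ∈ F)}
        rw [proj_hatV_aux, hπp l]

end StutterConstruction

theorem stmt13 (AP : Type) [Fintype AP] (K : FinKripke AP) (F : Set (Fin K.n))
    (Γ : Set AP) (hΓ : Γ.Nonempty) :
    ∃ (K' : FinKripke (AP ⊕ Unit)) (θ : LTL (AP ⊕ Unit)),
      stfr (LTL.atom '' Γ) '' (K.FairLang F) =
        {π : Trace AP | ∃ w ∈ K'.Lang, θ.Sat w 0 ∧ projSum w = π} := by
  obtain ⟨K', hK'⟩ := exists_finKripke (hatK K.K F Γ)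
  refine ⟨K', LTL.alw (LTL.ev (LTL.atom (Sum.inr ()))), ?_⟩
  rw [show K.FairLang F = K.K.FairLang F from rfl, main_stutter K.K F Γ, hK']
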